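/- Let B, C, G, R, θ, z_R, z_θ be real numbers with R ≠ 0 and D := G·cos²θ + sin²θ ≠ 0. If B·z_R² = G − C·sin²θ, B·z_θ² = R² − C·R²·cos²θ, and B·z_R·z_θ = −C·R·sinθ·cosθ, then C = G/D. -/
import Mathlib

open Real

/-- Derivation of equation (4.5): the system (4.4a)-(4.4c) forces C = G/(G cos²θ + sin²θ). -/
theorem stmt_5 (B C G R θ z_R z_θ : ℝ) (hR : R ≠ 0)
    (hD : G * Real.cos θ ^ 2 + Real.sin θ ^ 2 ≠ 0)
    (h1 : B * z_R ^ 2 = G - C * Real.sin θ ^ 2)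
    (h2 : B * z_θ ^ 2 = R ^ 2 - C * R ^ 2 * Real.cos θ ^ 2)
    (h3 : B * z_R * z_θ = -C * R * Real.sin θ * Real.cos θ) :
    C = G / (G * Real.cos θ ^ 2 + Real.sin θ ^ 2) := by
  have key : R ^ 2 * (G - C * (G * Real.cos θ ^ 2 + Real.sin θ ^ 2)) = 0 := by
    linear_combination (-(B * z_θ ^ 2)) * h1 + (C * Real.sin θ ^ 2 - G) * h2 +
      (B * z_R * z_θ - C * R * Real.sin θ * Real.cos θ) * h3
  have hR2 : R ^ 2 ≠ 0 := pow_ne_zero 2 hR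
  have h := (mul_eq_zero.mp key).resolve_left hR2
  field_simp
  linarith
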